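/- Let w, v be strings where w = 6^T ++ 5^T and v = 6^{θ1} ++ 5^{θ2} with 0 ≤ θ1, θ2 < T. Then δ(w, v) = (T − θ1) + (T − θ2), i.e., the edit distance between the two separator-like strings equals the total deficiency in symbol counts. -/

import Mathlib

namespace Levenshtein

/-- A cost function for edit operations (as in the former Mathlib `Levenshtein.Cost`). -/
structure Cost (α β δ : Type) where
  delete : α → δ
  insert : β → δ
  substitute : α → β → δ

/-- The default unit cost (as in the former Mathlib `Levenshtein.defaultCost`). -/
def defaultCost {α : Type} [DecidableEq α] : Cost α α ℕ where
  delete _ := 1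
  insert _ := 1
  substitute a b := if a = b then 0 else 1

end Levenshtein

/-- The former Mathlib `levenshtein`, given by its defining recursion equations. -/
def levenshtein {α β δ : Type} [AddZeroClass δ] [Min δ] (C : Levenshtein.Cost α β δ) :
    List α → List β → δ
  | [], [] => 0
  | [], y :: ys => C.insert y + levenshtein C [] ys
  | x :: xs, [] => C.delete x + levenshtein C xs []
  | x :: xs, y :: ys =>
    min (C.delete x + levenshtein C xs (y :: ys))
      (min (C.insert y + levenshtein C (x :: xs) ys) (C.substitute x y + levenshtein C xs ys))

/-- Unit-cost edit distance between two lists over a decidable-eq alphabet. -/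
def editDist (a b : List ℕ) : ℕ :=
  levenshtein Levenshtein.defaultCost a b

/-! Each edit operation changes the length by at most one, so the distance is at least the length
difference; when the target is a subsequence of the source, deleting the surplus letters achieves
it. Here `6^θ1 5^θ2` is a subsequence of `6^T 5^T`. -/

section

variable {α β δ : Type} [AddZeroClass δ] [Min δ] (C : Levenshtein.Cost α β δ)

@[simp] lemma levenshtein_nil_nil : levenshtein C [] [] = 0 := by
  rw [levenshtein]

@[simp] lemma levenshtein_cons_nil (x : α) (xs : List α) :
    levenshtein C (x :: xs) [] = C.delete x + levenshtein C xs [] := by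
  rw [levenshtein]

lemma levenshtein_cons_cons (x : α) (xs : List α) (y : β) (ys : List β) :
    levenshtein C (x :: xs) (y :: ys) =
      min (C.delete x + levenshtein C xs (y :: ys))
        (min (C.insert y + levenshtein C (x :: xs) ys) (C.substitute x y + levenshtein C xs ys)) := by
  rw [levenshtein]

end

namespace Levenshtein

variable {α : Type} [DecidableEq α]

@[simp] lemma defaultCost_delete (a : α) : (defaultCost : Cost α α ℕ).delete a = 1 := rfl

@[simp] lemma defaultCost_insert (a : α) : (defaultCost : Cost α α ℕ).insert a = 1 := rfl

@[simp] lemma defaultCost_substitute (a b : α) :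
    (defaultCost : Cost α α ℕ).substitute a b = if a = b then 0 else 1 := rfl

end Levenshtein

section

open Levenshtein

variable {α : Type} [DecidableEq α]

lemma levenshtein_nil_right (xs : List α) : levenshtein defaultCost xs [] = xs.length := by
  induction xs with
  | nil => simp
  | cons x xs ih => simp [ih, Nat.add_comm]

lemma length_le_levenshtein_add_length (xs ys : List α) :
    xs.length ≤ levenshtein defaultCost xs ys + ys.length := by
  induction xs generalizing ys with
  | nil => simp
  | cons x xs ihx =>
    induction ys with
    | nil => simp [levenshtein_nil_right]
    | cons y ys ihy =>
      have hdel := ihx (y :: ys)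
      have hsub := ihx ys
      simp only [levenshtein_cons_cons, defaultCost_delete, defaultCost_insert,
        List.length_cons] at *
      omega

lemma levenshtein_cons_le (x : α) (xs ys : List α) :
    levenshtein defaultCost (x :: xs) ys ≤ levenshtein defaultCost xs ys + 1 := by
  cases ys with
  | nil => simp [levenshtein_nil_right, Nat.add_comm]
  | cons y ys =>
    rw [levenshtein_cons_cons, Nat.add_comm]
    exact min_le_left _ _

lemma levenshtein_cons_cons_self_le (x : α) (xs ys : List α) :
    levenshtein defaultCost (x :: xs) (x :: ys) ≤ levenshtein defaultCost xs ys := by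
  rw [levenshtein_cons_cons]
  exact (min_le_right _ _).trans ((min_le_right _ _).trans (by simp))

lemma levenshtein_add_length_le_of_sublist {xs ys : List α} (h : List.Sublist ys xs) :
    levenshtein defaultCost xs ys + ys.length ≤ xs.length := by
  induction h with
  | slnil => simp
  | @cons l₁ l₂ x _ ih =>
    have := levenshtein_cons_le x l₂ l₁
    simp only [List.length_cons]
    omega
  | @cons_cons l₁ l₂ x _ ih =>
    have := levenshtein_cons_cons_self_le x l₂ l₁
    simp only [List.length_cons]
    omega

theorem levenshtein_eq_of_sublist {xs ys : List α} (h : List.Sublist ys xs) :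
    levenshtein defaultCost xs ys = xs.length - ys.length := by
  have := length_le_levenshtein_add_length xs ys
  have := levenshtein_add_length_le_of_sublist h
  omega

end

/-- Edit distance between the separator `6^T 5^T` and the deficient separator
`6^{θ1} 5^{θ2}` (with `θ1, θ2 < T`) equals the total count deficiency. -/
theorem editDist_separator
    (T θ1 θ2 : ℕ) (h1 : θ1 < T) (h2 : θ2 < T) :
    editDist (List.replicate T 6 ++ List.replicate T 5)
        (List.replicate θ1 6 ++ List.replicate θ2 5) =
      (T - θ1) + (T - θ2) := by
  have hsub : List.Sublist (List.replicate θ1 6 ++ List.replicate θ2 5)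
      (List.replicate T 6 ++ List.replicate T 5) :=
    ((List.replicate_sublist_replicate 6).2 h1.le).append
      ((List.replicate_sublist_replicate 5).2 h2.le)
  rw [editDist, levenshtein_eq_of_sublist hsub]
  simp only [List.length_append, List.length_replicate]
  omega
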